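/- arXiv:1903.08988 — 2 statements merged into one kernel-verified Lean document; each statement's English description precedes it below -/
import Mathlib

section
/- There exists a finite simple graph G, two non-adjacent vertices u and v, and a positive integer ℓ such that: every set of vertices (avoiding u and v) that meets all u–v paths of length at most ℓ has cardinality at least 2, yet there do not exist two internally vertex-disjoint u–v paths each of length at most ℓ. In other words, when path lengths are bounded, the minimum vertex cut among bounded-length paths can strictly exceed the maximum number of internally disjoint bounded-length paths, so the length-restricted analogue of Menger's theorem fails. -/
open SimpleGraph

/-- Two `u`–`v` walks are internally vertex-disjoint if they share no vertices other
than the endpoints `u` and `v`. -/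
def InternallyDisjoint {V : Type*} {G : SimpleGraph V} {u v : V}
    (p q : G.Walk u v) : Prop :=
  ∀ w, w ∈ p.support → w ∈ q.support → w = u ∨ w = v

/-!
In `mengerGraph` the paths from `0` to `8` of length at most `5` are exactly
`0-2-1-8`, `0-2-6-1-8`, `0-2-6-3-4-8` and `0-5-7-6-1-8`. Any two of them share an inner vertex
(`2`, `1` or `6`), so no two are internally disjoint; but no inner vertex lies on all of them,
so no single vertex meets them all. Both facts are finite checks over the walks of length
at most `5`.
-/

namespace SimpleGraph

variable {V : Type*} {G : SimpleGraph V}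

/-- Stated with `support.Nodup` rather than `IsPath`, whose `Decidable` instance does not
reduce in the kernel, so that the right-hand side can be settled by `decide`. -/
theorem forall_isPath_length_le_iff [DecidableEq V] [G.LocallyFinite] {u v : V} {ℓ : ℕ}
    {P : G.Walk u v → Prop} :
    (∀ p : G.Walk u v, p.IsPath → p.length ≤ ℓ → P p) ↔
      ∀ p ∈ G.finsetWalkLengthLT (ℓ + 1) u v, p.support.Nodup → P p := by
  simp only [mem_finsetWalkLengthLT_iff, Nat.lt_succ_iff, Walk.isPath_def]
  exact forall_congr' fun p => imp.swap

theorem two_le_card_of_meets_walks {u v : V} {S : Set (G.Walk u v)} (hS : S.Nonempty)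
    (hcommon : ∀ w, (∀ p ∈ S, w ∈ p.support) → w = u ∨ w = v)
    {C : Finset V} (hu : u ∉ C) (hv : v ∉ C) (hC : ∀ p ∈ S, ∃ w ∈ p.support, w ∈ C) :
    2 ≤ C.card := by
  by_contra! hcard
  obtain ⟨p₀, hp₀⟩ := hS
  obtain ⟨w, -, hwC⟩ := hC p₀ hp₀
  have hw : ∀ p ∈ S, w ∈ p.support := fun p hp => by
    obtain ⟨w', hw'p, hw'C⟩ := hC p hp
    rwa [Finset.card_le_one.mp (Nat.lt_succ_iff.mp hcard) w hwC w' hw'C]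
  rcases hcommon w hw with rfl | rfl
  exacts [hu hwC, hv hwC]

theorem not_internallyDisjoint_of_mem_support {u v w : V} {p q : G.Walk u v}
    (hp : w ∈ p.support) (hq : w ∈ q.support) (hu : w ≠ u) (hv : w ≠ v) :
    ¬ InternallyDisjoint p q :=
  fun h => (h w hp hq).elim hu hv

end SimpleGraph

def mengerEdges : List (Fin 9 × Fin 9) :=
  [(0,2),(0,5),(1,2),(1,6),(1,8),(2,6),(3,4),(3,6),(4,8),(5,7),(6,7)]

def mengerGraph : SimpleGraph (Fin 9) where
  Adj a b := (a, b) ∈ mengerEdges ∨ (b, a) ∈ mengerEdges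
  symm := ⟨by decide⟩
  loopless := ⟨by decide⟩

instance : DecidableRel mengerGraph.Adj := fun a b =>
  inferInstanceAs (Decidable ((a, b) ∈ mengerEdges ∨ (b, a) ∈ mengerEdges))

theorem mengerGraph_exists_short_path :
    ∃ p : mengerGraph.Walk 0 8, p.IsPath ∧ p.length ≤ 5 :=
  ⟨.cons (u := 0) (v := 2) (by decide) (.cons (v := 1) (by decide) (.cons (by decide) .nil)),
    Walk.isPath_def _ |>.mpr (by decide), by decide⟩

theorem mengerGraph_short_paths_no_common_inner_vertex (w : Fin 9)
    (hw : ∀ p : mengerGraph.Walk 0 8, p.IsPath → p.length ≤ 5 → w ∈ p.support) :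
    w = 0 ∨ w = 8 := by
  rw [forall_isPath_length_le_iff] at hw
  revert w
  decide

theorem mengerGraph_short_paths_pairwise_meet :
    ∀ p : mengerGraph.Walk 0 8, p.IsPath → p.length ≤ 5 →
      ∀ q : mengerGraph.Walk 0 8, q.IsPath → q.length ≤ 5 →
        ∃ w ∈ p.support, w ∈ q.support ∧ w ≠ 0 ∧ w ≠ 8 := by
  simp only [forall_isPath_length_le_iff]
  decide

/-- The length-restricted analogue of Menger's theorem fails: there is a finite graph,
non-adjacent vertices `u ≠ v` and a bound `ℓ` such that every vertex set (avoiding `u`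
and `v`) meeting all `u`–`v` paths of length at most `ℓ` has at least `2` elements, yet
there are no two internally vertex-disjoint `u`–`v` paths of length at most `ℓ`. -/
theorem length_restricted_menger_fails :
    ∃ (n : ℕ) (G : SimpleGraph (Fin n)) (u v : Fin n) (ℓ : ℕ),
      u ≠ v ∧ ¬ G.Adj u v ∧ 0 < ℓ ∧
      (∀ C : Finset (Fin n), u ∉ C → v ∉ C →
        (∀ p : G.Walk u v, p.IsPath → p.length ≤ ℓ → ∃ w ∈ p.support, w ∈ C) →
        2 ≤ C.card) ∧
      ¬ ∃ p q : G.Walk u v, p.IsPath ∧ q.IsPath ∧ p.length ≤ ℓ ∧ q.length ≤ ℓ ∧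
          p ≠ q ∧ InternallyDisjoint p q := by
  refine ⟨9, mengerGraph, 0, 8, 5, by decide, by decide, by decide, ?_, ?_⟩
  · intro C hu hv hC
    refine two_le_card_of_meets_walks (S := {p | p.IsPath ∧ p.length ≤ 5})
      mengerGraph_exists_short_path (fun w hw => ?_) hu hv fun p hp => hC p hp.1 hp.2
    exact mengerGraph_short_paths_no_common_inner_vertex w fun p hp hl => hw p ⟨hp, hl⟩
  · rintro ⟨p, q, hp, hq, hlp, hlq, -, hdisj⟩
    obtain ⟨w, hwp, hwq, hw0, hw8⟩ := mengerGraph_short_paths_pairwise_meet p hp hlp q hq hlq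
    exact not_internallyDisjoint_of_mem_support hwp hwq hw0 hw8 hdisj
end

section
/- Let n and k be integers with k ≥ 3 and n ≥ k + 2, and let G be the generalized wheel on n vertices: the join of a cycle on n - k + 2 vertices with a complete graph (clique) on k - 2 vertices, i.e., every cycle vertex is additionally adjacent to every clique vertex and the clique vertices are pairwise adjacent. Let u and v be two cycle vertices at distance 2 along the cycle. Then any family of k pairwise internally vertex-disjoint u–v paths in G must contain a path of length at least n - k. (Hence the wide diameter upper bound n - k is attained, and the broadcast latency bound for Dolev-style reliable broadcast is tight on generalized wheels.) -/
open SimpleGraph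

/-- The join of two vertex-disjoint graphs: all edges of both graphs together with all
edges between the two vertex sets. -/
def joinGraph {α β : Type*} (G₁ : SimpleGraph α) (G₂ : SimpleGraph β) :
    SimpleGraph (α ⊕ β) :=
  SimpleGraph.fromRel (fun x y =>
    match x, y with
    | Sum.inl a, Sum.inl b => G₁.Adj a b
    | Sum.inr a, Sum.inr b => G₂.Adj a b
    | _, _ => True)

/-! The endpoint `Sum.inl a` has exactly `k` neighbours: `a - 1`, `a + 1` and the clique.
Since the endpoints are not adjacent, `k` internally disjoint walks leave `Sum.inl a` through
pairwise different neighbours, so one of them leaves through `a - 1` and never meets `a + 1` or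
the clique. That walk stays on the cycle and never steps from `a` to `a + 1`, so along it the
potential `(a - x).val` grows by at most one per step, from `0` at `a` to `n - k` at `a + 2`. -/

section Walks

variable {V : Type*} {G : SimpleGraph V}

theorem SimpleGraph.Walk.le_add_length_of_forall_mem_darts {u v : V} (f : V → ℕ)
    (p : G.Walk u v) (hf : ∀ d ∈ p.darts, f d.snd ≤ f d.fst + 1) : f v ≤ f u + p.length := by
  induction p with
  | nil => simp
  | cons h p ih =>
    simp only [Walk.darts_cons, List.mem_cons, forall_eq_or_imp] at hf
    have := ih hf.2
    simp only [Walk.length_cons]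
    omega

theorem InternallyDisjoint.snd_notMem_support {u v : V} {p q : G.Walk u v}
    (h : InternallyDisjoint p q) (huv : u ≠ v) (hadj : ¬G.Adj u v) : q.snd ∉ p.support := by
  intro hq
  have hsnd : G.Adj u q.snd := Walk.adj_snd (Walk.not_nil_of_ne huv)
  rcases h _ hq (q.getVert_mem_support 1) with hu | hv
  · exact hsnd.ne' hu
  · exact hadj (hv ▸ hsnd)

theorem InternallyDisjoint.exists_forall_adj_ne_notMem_support {ι : Type*} [Fintype ι] {u v : V}
    [Fintype (G.neighborSet u)] (huv : u ≠ v) (hadj : ¬G.Adj u v) (P : ι → G.Walk u v)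
    (hdisj : Pairwise fun i j => InternallyDisjoint (P i) (P j))
    (hcard : G.degree u ≤ Fintype.card ι) {w : V} (hw : G.Adj u w) :
    ∃ i, ∀ w', G.Adj u w' → w' ≠ w → w' ∉ (P i).support := by
  let s : ι → G.neighborSet u := fun i => ⟨(P i).snd, Walk.adj_snd (Walk.not_nil_of_ne huv)⟩
  have hs : Function.Injective s := by
    intro i j hij
    by_contra hne
    have hij : (P i).snd = (P j).snd := congrArg Subtype.val hij
    exact (hdisj hne).snd_notMem_support huv hadj (hij ▸ (P i).getVert_mem_support 1)
  have hsurj : Function.Surjective s := by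
    refine ((Fintype.bijective_iff_injective_and_card s).mpr
      ⟨hs, (Fintype.card_le_of_injective s hs).antisymm ?_⟩).2
    rwa [card_neighborSet_eq_degree]
  obtain ⟨i, hi⟩ := hsurj ⟨w, hw⟩
  refine ⟨i, fun w' hw' hne => ?_⟩
  obtain ⟨j, hj⟩ := hsurj ⟨w', hw'⟩
  have hji : j ≠ i := by
    rintro rfl
    exact hne (congrArg Subtype.val (hj.symm.trans hi))
  have hsnd : (P j).snd = w' := congrArg Subtype.val hj
  exact hsnd ▸ (hdisj hji.symm).snd_notMem_support huv hadj

end Walks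

section joinGraph

variable {α β : Type*} {G₁ : SimpleGraph α} {G₂ : SimpleGraph β}

@[simp]
theorem joinGraph_adj_inl_inl {x y : α} :
    (joinGraph G₁ G₂).Adj (Sum.inl x) (Sum.inl y) ↔ G₁.Adj x y := by
  simp only [joinGraph, fromRel_adj, ne_eq, Sum.inl.injEq]
  exact ⟨fun ⟨_, h⟩ => h.elim id G₁.adj_symm, fun h => ⟨h.ne, .inl h⟩⟩

@[simp]
theorem joinGraph_adj_inl_inr {x : α} {y : β} : (joinGraph G₁ G₂).Adj (Sum.inl x) (Sum.inr y) := by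
  simp [joinGraph]

theorem joinGraph_neighborFinset_inl [Fintype β] (x : α) [Fintype (G₁.neighborSet x)]
    [Fintype ((joinGraph G₁ G₂).neighborSet (Sum.inl x))] :
    (joinGraph G₁ G₂).neighborFinset (Sum.inl x) = (G₁.neighborFinset x).disjSum Finset.univ := by
  ext (y | y) <;> simp

theorem joinGraph_degree_inl [Fintype β] (x : α) [Fintype (G₁.neighborSet x)]
    [Fintype ((joinGraph G₁ G₂).neighborSet (Sum.inl x))] :
    (joinGraph G₁ G₂).degree (Sum.inl x) = G₁.degree x + Fintype.card β := by
  rw [degree, degree, joinGraph_neighborFinset_inl, Finset.card_disjSum, Finset.card_univ]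

end joinGraph

theorem cycleGraph_val_sub_le {m : ℕ} {x b c : Fin (m + 2)} (h : (cycleGraph (m + 2)).Adj b c)
    (hc : c ≠ x + 1) : (x - c).val ≤ (x - b).val + 1 := by
  rcases cycleGraph_adj.mp h with h | h
  · rw [show x - c = x - b + 1 by rw [← h]; abel, Fin.val_add_one]
    split_ifs <;> omega
  · have hxb : x - b ≠ 0 := fun h0 => hc <| by
      rw [sub_eq_iff_eq_add.mp h, sub_eq_zero.mp h0]
      exact add_comm _ _
    rw [show x - c = x - b - 1 by rw [← h]; abel, Fin.coe_sub_one, if_neg hxb]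
    omega

theorem joinGraph_cycleGraph_val_sub_le_length {β : Type*} {m : ℕ} {H : SimpleGraph β}
    {x y : Fin (m + 2)} (p : (joinGraph (cycleGraph (m + 2)) H).Walk (Sum.inl x) (Sum.inl y))
    (hx : Sum.inl (x + 1) ∉ p.support) (hH : ∀ z, Sum.inr z ∉ p.support) :
    (x - y).val ≤ p.length := by
  have key := p.le_add_length_of_forall_mem_darts (Sum.elim (fun b => (x - b).val) 0) ?_
  · simpa using key
  rintro ⟨⟨s, t⟩, hst⟩ hd
  have hs := p.dart_fst_mem_support_of_mem_darts hd
  have ht := p.dart_snd_mem_support_of_mem_darts hd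
  rcases s with b | z
  swap; · exact absurd hs (hH z)
  rcases t with c | z
  swap; · exact absurd ht (hH z)
  exact cycleGraph_val_sub_le (joinGraph_adj_inl_inl.mp hst) fun h => hx (h ▸ ht)

theorem exists_le_length_of_internallyDisjoint_joinGraph_cycleGraph {β ι : Type*} [Fintype β]
    [Fintype ι] {m : ℕ} (hm : 2 ≤ m) (H : SimpleGraph β)
    (hι : Fintype.card ι = Fintype.card β + 2) (a b : Fin (m + 2)) (hab : (b - a).val = 2)
    (P : ι → (joinGraph (cycleGraph (m + 2)) H).Walk (Sum.inl a) (Sum.inl b))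
    (hdisj : Pairwise fun i j => InternallyDisjoint (P i) (P j)) :
    ∃ i, m ≤ (P i).length := by
  classical
  have hba : (a - b).val = m := by
    rw [← neg_sub, Fin.val_neg', hab, Nat.add_sub_cancel, Nat.mod_eq_of_lt (by omega)]
  have hne : a ≠ b := fun h => by simp [h] at hab
  have hnadj : ¬(joinGraph (cycleGraph (m + 2)) H).Adj (Sum.inl a) (Sum.inl b) := by
    simp only [joinGraph_adj_inl_inl, cycleGraph_adj, Fin.ext_iff, hab, hba, Fin.val_one',
      Nat.one_mod_eq_one.mpr (by omega : m + 2 ≠ 1)]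
    omega
  have hpair : a - 1 ≠ a + 1 := by
    rw [Ne, sub_eq_iff_eq_add, add_assoc, left_eq_add, Fin.ext_iff, Fin.val_add, Fin.val_one',
      Fin.val_zero, Nat.one_mod_eq_one.mpr (by omega), Nat.mod_eq_of_lt (by omega)]
    omega
  have hdeg : (joinGraph (cycleGraph (m + 2)) H).degree (Sum.inl a) = Fintype.card ι := by
    rw [joinGraph_degree_inl, cycleGraph_degree_two_le, Finset.card_pair hpair, hι, add_comm]
  obtain ⟨i, hi⟩ := InternallyDisjoint.exists_forall_adj_ne_notMem_support
    (Sum.inl_injective.ne hne) hnadj P hdisj hdeg.le (w := Sum.inl (a - 1))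
    (by simp [cycleGraph_adj])
  refine ⟨i, hba.ge.trans <| joinGraph_cycleGraph_val_sub_le_length (P i) ?_ fun z => ?_⟩
  · exact hi _ (by simp [cycleGraph_adj]) (by simpa using hpair.symm)
  · exact hi _ (by simp) (by simp)

/-- In the generalized wheel on `n` vertices (the join of a cycle on `n - k + 2`
vertices with a clique on `k - 2` vertices, for `k ≥ 3` and `n ≥ k + 2`), for any two
cycle vertices at distance `2` along the cycle, every family of `k` pairwise internally
vertex-disjoint paths joining them contains a path of length at least `n - k`. -/
theorem generalized_wheel_long_path (n k : ℕ) (hk : 3 ≤ k) (hn : k + 2 ≤ n)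
    (a : Fin (n - k + 2))
    (P : Fin k → (joinGraph (cycleGraph (n - k + 2)) (⊤ : SimpleGraph (Fin (k - 2)))).Walk
      (Sum.inl a) (Sum.inl (a + ⟨2, by omega⟩)))
    (hdisj : ∀ i j, i ≠ j → InternallyDisjoint (P i) (P j)) :
    ∃ i, n - k ≤ (P i).length :=
  exists_le_length_of_internallyDisjoint_joinGraph_cycleGraph (by omega) ⊤
    (by simp only [Fintype.card_fin]; omega) a _ (by simp) P hdisj
end
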